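/- A faithful index function cannot be computable: there is no computable injective function I from descriptions of Turing machines to binary strings such that C(t) ≤ |I(t)| ≤ C(t) + c for all machine descriptions t and some constant c. -/

import Mathlib

/-! A computable faithful index would compute `C` up to the constant `c`, and a Berry-paradox
search then contradicts it. Since `I` is injective its lengths are unbounded, so computably
choose `s n` with `n ≤ |I (s n)|`. The machine `p ↦ s (2|p|)` describes `t = s (2m)` in `m + k`
bits, whence `2m ≤ |I t| ≤ C(t) + c ≤ m + k + c`, false for `m = k + c + 1`. -/

/-- Plain Kolmogorov complexity relative to a partial machine `U`. -/
noncomputable def plainC (U : List Bool →. List Bool) (x : List Bool) : ℕ :=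
  sInf {n | ∃ q : List Bool, U q = Part.some x ∧ n = q.length}

theorem exists_le_length_of_injective {α β : Type*} [Infinite α] [Finite β] {f : α → List β}
    (hf : Function.Injective f) (n : ℕ) : ∃ a, n ≤ (f a).length := by
  by_contra! h
  exact Set.infinite_range_of_injective hf <|
    (List.finite_length_lt β n).subset (Set.range_subset_iff.2 h)

theorem exists_computable_choice {α β : Type*} [Primcodable α] [Primcodable β]
    {p : β → α → Bool} (hp : Computable₂ p) (h : ∀ b, ∃ a, p b a) :
    ∃ s : β → α, Computable s ∧ ∀ b, p b (s b) := by
  set search : β → ℕ → Option α := fun b k =>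
    (Encodable.decode k : Option α).bind fun a => bif p b a then some a else none
  have hsearch : Computable₂ search :=
    (Computable.decode.comp Computable.snd).option_bind <|
      (Computable.cond (hp.comp (Computable.fst.comp Computable.fst) Computable.snd)
        (Computable.option_some.comp Computable.snd) (Computable.const none)).to₂
  have hdom : ∀ b, (Nat.rfindOpt (search b)).Dom := fun b => by
    obtain ⟨a, ha⟩ := h b
    exact Nat.rfindOpt_dom.2 ⟨Encodable.encode a, a, by simp [search, ha]⟩
  refine ⟨fun b => (Nat.rfindOpt (search b)).get (hdom b),
    (Partrec.rfindOpt hsearch).of_eq fun b => (Part.some_get (hdom b)).symm, fun b => ?_⟩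
  beta_reduce
  obtain ⟨k, hk⟩ := Nat.rfindOpt_spec (Part.get_mem (hdom b))
  obtain ⟨a, -, ha⟩ := Option.bind_eq_some_iff.1 hk
  cases hpa : p b a
  · simp [hpa] at ha
  · simp only [hpa, cond_true, Option.some.injEq] at ha
    rwa [← ha]

theorem exists_plainC_le_length_add (U : List Bool →. List Bool)
    (hUuniv : ∀ f : List Bool →. List Bool, Partrec f →
      ∃ e : List Bool, ∀ p : List Bool, U (e ++ p) = f p)
    {f : List Bool → List Bool} (hf : Computable f) :
    ∃ k, ∀ p, plainC U (f p) ≤ p.length + k := by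
  obtain ⟨e, he⟩ := hUuniv _ hf
  refine ⟨e.length, fun p => Nat.sInf_le ⟨e ++ p, he p, ?_⟩⟩
  rw [List.length_append, Nat.add_comm]

theorem no_computable_faithful_index_general (U : List Bool →. List Bool)
    (hUuniv : ∀ f : List Bool →. List Bool, Partrec f →
      ∃ e : List Bool, ∀ p : List Bool, U (e ++ p) = f p) :
    ¬ ∃ (I : List Bool → List Bool) (c : ℕ),
        Computable I ∧ Function.Injective I ∧
        ∀ t : List Bool, plainC U t ≤ (I t).length ∧ (I t).length ≤ plainC U t + c := by
  rintro ⟨I, c, hIcomp, hIinj, hI⟩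
  obtain ⟨s, hs, hsI⟩ := exists_computable_choice (p := fun n t => decide (n ≤ (I t).length))
    (Primrec.nat_le.decide.to_comp.comp Computable.fst
      (Computable.list_length.comp (hIcomp.comp Computable.snd)))
    (fun n => by simpa using exists_le_length_of_injective hIinj n)
  obtain ⟨k, hk⟩ := exists_plainC_le_length_add U hUuniv
    (hs.comp (Primrec.nat_double.to_comp.comp Computable.list_length))
  set m := k + c + 1
  set t := s (2 * m)
  have : 2 * m ≤ m + k + c := calc
    2 * m ≤ (I t).length := by simpa using hsI (2 * m)
    _ ≤ plainC U t + c := (hI t).2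
    _ ≤ m + k + c := by simpa using hk (List.replicate m true)
  omega

/-- A faithful index function cannot be computable: for a universal machine `U`,
there is no computable injective `I` from machine descriptions to binary strings
with `C(t) ≤ |I(t)| ≤ C(t) + c` for all `t`. -/
theorem no_computable_faithful_index (U : List Bool →. List Bool)
    (hUpartrec : Partrec U)
    (hUuniv : ∀ f : List Bool →. List Bool, Partrec f →
      ∃ e : List Bool, ∀ p : List Bool, U (e ++ p) = f p) :
    ¬ ∃ (I : List Bool → List Bool) (c : ℕ),
        Computable I ∧ Function.Injective I ∧
        ∀ t : List Bool, plainC U t ≤ (I t).length ∧ (I t).length ≤ plainC U t + c :=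
  no_computable_faithful_index_general U hUuniv
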